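/- Suppose V ∈ C²(ℝ^n) satisfies |∂_x^α V(x)| ≤ C₀⟨∂_xV(x)⟩^s for all |α| = 2 and all x, with s < 2. Then the metric g_x = ⟨∂_xV(x)⟩^s |dx|² on ℝ^n is slowly varying: there exist constants C_* > 1 and r > 0 such that g_x(x − x̃) ≤ r² implies C_*^{−1} ≤ ⟨∂_xV(x)⟩/⟨∂_xV(x̃)⟩ ≤ C_*. -/

import Mathlib

open MeasureTheory Real Filter

noncomputable section

/-- Phase space `ℝ^n_x × ℝ^n_y`. -/
abbrev Sp (n : ℕ) := (Fin n → ℝ) × (Fin n → ℝ)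

/-- Partial derivative in `x_j`. -/
noncomputable def pdx {n : ℕ} (j : Fin n) (u : Sp n → ℂ) (p : Sp n) : ℂ :=
  fderiv ℝ u p (Pi.single j 1, 0)

/-- Partial derivative in `y_j`. -/
noncomputable def pdy {n : ℕ} (j : Fin n) (u : Sp n → ℂ) (p : Sp n) : ℂ :=
  fderiv ℝ u p (0, Pi.single j 1)

/-- Gradient of a real potential. -/
noncomputable def gradV {n : ℕ} (V : (Fin n → ℝ) → ℝ) (x : Fin n → ℝ) : Fin n → ℝ :=
  fun j => fderiv ℝ V x (Pi.single j 1)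

/-- Japanese bracket `⟨v⟩ = (1 + |v|²)^{1/2}` (Euclidean). -/
noncomputable def brk {n : ℕ} (v : Fin n → ℝ) : ℝ := Real.sqrt (1 + ∑ j, (v j) ^ 2)

/-- the weight `⟨∂_x V(x)⟩^a`. -/
noncomputable def wt {n : ℕ} (V : (Fin n → ℝ) → ℝ) (a : ℝ) (x : Fin n → ℝ) : ℝ :=
  brk (gradV V x) ^ a

/-- `h · (v ∧ ∂_y) u` in dimension 3. -/
noncomputable def vWedgeDy (h v : Fin 3 → ℝ) (u : Sp 3 → ℂ) (p : Sp 3) : ℂ :=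
  (h 0 : ℂ) * ((v 1 : ℂ) * pdy 2 u p - (v 2 : ℂ) * pdy 1 u p)
  + (h 1 : ℂ) * ((v 2 : ℂ) * pdy 0 u p - (v 0 : ℂ) * pdy 2 u p)
  + (h 2 : ℂ) * ((v 0 : ℂ) * pdy 1 u p - (v 1 : ℂ) * pdy 0 u p)

/-- `h · (y ∧ ∂_y) u` in dimension 3. -/
noncomputable def yWedgeDy (h : Fin 3 → ℝ) (u : Sp 3 → ℂ) (p : Sp 3) : ℂ :=
  vWedgeDy h p.2 u p

/-- cross product of vectors in `ℝ³`. -/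
noncomputable def cross3 (a b : Fin 3 → ℝ) : Fin 3 → ℝ :=
  ![a 1 * b 2 - a 2 * b 1, a 2 * b 0 - a 0 * b 2, a 0 * b 1 - a 1 * b 0]

/-- the triple product `h · (a ∧ b)`. -/
noncomputable def trip (h a b : Fin 3 → ℝ) : ℝ := ∑ j, h j * cross3 a b j

/-- transport part `Q = y·∂_x − ∂_xV·∂_y − H·(y ∧ ∂_y)`. -/
noncomputable def Qop (V : (Fin 3 → ℝ) → ℝ) (H : (Fin 3 → ℝ) → Fin 3 → ℝ)
    (u : Sp 3 → ℂ) (p : Sp 3) : ℂ :=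
  (∑ j, (p.2 j : ℂ) * pdx j u p) - (∑ j, (gradV V p.1 j : ℂ) * pdy j u p)
    - yWedgeDy (H p.1) u p

/-- harmonic oscillator part `−Δ_y + |y|²/4 − n/2`. -/
noncomputable def OSC {n : ℕ} (u : Sp n → ℂ) (p : Sp n) : ℂ :=
  -(∑ j, pdy j (pdy j u) p) + (((∑ j, (p.2 j) ^ 2) / 4 : ℝ) : ℂ) * u p
    - ((n / 2 : ℝ) : ℂ) * u p

/-- the Fokker–Planck operator with electromagnetic fields. -/
noncomputable def Pop (V : (Fin 3 → ℝ) → ℝ) (H : (Fin 3 → ℝ) → Fin 3 → ℝ)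
    (u : Sp 3 → ℂ) (p : Sp 3) : ℂ :=
  Qop V H u p + OSC u p

/-- frozen-coefficient Fokker–Planck operator. -/
noncomputable def Pfrozen (v h : Fin 3 → ℝ) (u : Sp 3 → ℂ) (p : Sp 3) : ℂ :=
  (∑ j, (p.2 j : ℂ) * pdx j u p) - (∑ j, (v j : ℂ) * pdy j u p)
    - yWedgeDy h u p + OSC u p

/-- annihilation operator `L_j = ∂_{y_j} + y_j/2`. -/
noncomputable def Lop {n : ℕ} (j : Fin n) (u : Sp n → ℂ) (p : Sp n) : ℂ :=
  pdy j u p + ((p.2 j / 2 : ℝ) : ℂ) * u p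

/-- creation operator `L_j^* = −∂_{y_j} + y_j/2`. -/
noncomputable def Lstar {n : ℕ} (j : Fin n) (u : Sp n → ℂ) (p : Sp n) : ℂ :=
  -pdy j u p + ((p.2 j / 2 : ℝ) : ℂ) * u p

/-- squared `L²` norm. -/
noncomputable def l2sq {α : Type*} [MeasureSpace α] (f : α → ℂ) : ℝ := ∫ p, ‖f p‖ ^ 2

/-- `L²` norm. -/
noncomputable def l2n {α : Type*} [MeasureSpace α] (f : α → ℂ) : ℝ := Real.sqrt (l2sq f)

/-- `L²` hermitian inner product `⟨f, g⟩ = ∫ f ḡ`. -/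
noncomputable def l2i {α : Type*} [MeasureSpace α] (f g : α → ℂ) : ℂ :=
  ∫ p, f p * (starRingEnd ℂ) (g p)

/-- test functions: smooth and compactly supported. -/
def IsTest {E F : Type*} [NormedAddCommGroup E] [NormedSpace ℝ E]
    [NormedAddCommGroup F] [NormedSpace ℝ F] (u : E → F) : Prop :=
  ContDiff ℝ (⊤ : ℕ∞) u ∧ HasCompactSupport u

/-- Fourier kernel `e^{-2πi x·ξ}`. -/
noncomputable def FTker {n : ℕ} (x ξ : Fin n → ℝ) : ℂ :=
  Complex.exp (-2 * Real.pi * Complex.I * ((∑ j, x j * ξ j : ℝ) : ℂ))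

/-- Fourier multiplier with symbol `m(ξ)` acting in the `x` variable. -/
noncomputable def Jx {n : ℕ} (m : (Fin n → ℝ) → ℝ) (u : Sp n → ℂ) (p : Sp n) : ℂ :=
  ∫ ξ, (FTker p.1 ξ)⁻¹ * (m ξ : ℂ) * ∫ x, FTker x ξ * u (x, p.2)

/-- Fourier multiplier with symbol `m(η)` acting in the `y` variable. -/
noncomputable def Jy {n : ℕ} (m : (Fin n → ℝ) → ℝ) (u : Sp n → ℂ) (p : Sp n) : ℂ :=
  ∫ η, (FTker p.2 η)⁻¹ * (m η : ℂ) * ∫ y, FTker y η * u (p.1, y)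

/-- one-variable partial derivative. -/
noncomputable def pd {n : ℕ} (j : Fin n) (u : (Fin n → ℝ) → ℂ) (x : Fin n → ℝ) : ℂ :=
  fderiv ℝ u x (Pi.single j 1)

/-- one-variable annihilation operator. -/
noncomputable def Lo {n : ℕ} (j : Fin n) (u : (Fin n → ℝ) → ℂ) (x : Fin n → ℝ) : ℂ :=
  pd j u x + ((x j / 2 : ℝ) : ℂ) * u x

/-- one-variable creation operator. -/
noncomputable def Lso {n : ℕ} (j : Fin n) (u : (Fin n → ℝ) → ℂ) (x : Fin n → ℝ) : ℂ :=
  -pd j u x + ((x j / 2 : ℝ) : ℂ) * u x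

/-- second partial derivatives of the potential. -/
noncomputable def D2 {n : ℕ} (V : (Fin n → ℝ) → ℝ) (x : Fin n → ℝ) (i j : Fin n) : ℝ :=
  fderiv ℝ (fun z => fderiv ℝ V z (Pi.single i 1)) x (Pi.single j 1)


private lemma gradLineDeriv {n : ℕ} {V : (Fin n → ℝ) → ℝ} (hV : ContDiff ℝ 2 V)
    (x d : Fin n → ℝ) (j : Fin n) (t : ℝ) :
    HasDerivAt (fun t : ℝ => gradV V (x + t • d) j)
      (∑ i, D2 V (x + t • d) j i * d i) t := by
  set G : (Fin n → ℝ) → ℝ := fun z => fderiv ℝ V z (Pi.single j 1) with hGdef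
  have hG : ContDiff ℝ 1 G := by
    have h1 : ContDiff ℝ 1 (fderiv ℝ V) := hV.fderiv_right (by norm_num)
    exact h1.clm_apply contDiff_const
  have hγ : HasDerivAt (fun t : ℝ => x + t • d) d t := by
    simpa using ((hasDerivAt_id t).smul_const d).const_add x
  have hGd : HasFDerivAt G (fderiv ℝ G (x + t • d)) (x + t • d) :=
    (hG.differentiable one_ne_zero (x + t • d)).hasFDerivAt
  have hc := hGd.comp_hasDerivAt t hγ
  have hsum : (fderiv ℝ G (x + t • d)) d = ∑ i, D2 V (x + t • d) j i * d i := by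
    have hd : d = ∑ i, d i • (Pi.single i (1:ℝ) : Fin n → ℝ) := by
      funext k
      simp [Finset.sum_apply, Pi.single_apply]
    set L := fderiv ℝ G (x + t • d) with hL
    calc L d = L (∑ i, d i • (Pi.single i (1:ℝ) : Fin n → ℝ)) := by rw [← hd]
    _ = ∑ i, d i • L (Pi.single i (1:ℝ) : Fin n → ℝ) := by rw [map_sum]; simp
    _ = ∑ i, D2 V (x + t • d) j i * d i := by
        refine Finset.sum_congr rfl fun i _ => ?_
        simp [hL, D2, smul_eq_mul, mul_comm, G]
  rw [hsum] at hc
  exact hc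

private lemma brk_one_le {n : ℕ} (v : Fin n → ℝ) : 1 ≤ brk v := by
  rw [brk, show (1:ℝ) = Real.sqrt 1 by rw [Real.sqrt_one]]
  apply Real.sqrt_le_sqrt
  have : (0:ℝ) ≤ ∑ j, (v j)^2 := by positivity
  rw [Real.sqrt_one]; linarith

lemma brk_pos {n : ℕ} (v : Fin n → ℝ) : 0 < brk v := lt_of_lt_of_le one_pos (brk_one_le v)

lemma abs_le_brk {n : ℕ} (v : Fin n → ℝ) (j : Fin n) : |v j| ≤ brk v := by
  rw [brk, ← Real.sqrt_sq_eq_abs]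
  apply Real.sqrt_le_sqrt
  have h : ∀ i ∈ Finset.univ, (0:ℝ) ≤ (v i)^2 := fun i _ => sq_nonneg _
  have := Finset.single_le_sum h (Finset.mem_univ j)
  linarith

set_option maxHeartbeats 1000000 in
theorem stmt8 {n : ℕ} (V : (Fin n → ℝ) → ℝ) (C₀ s : ℝ) (hC₀ : 0 < C₀) (hs : s < 2)
    (hV : ContDiff ℝ 2 V)
    (hV2 : ∀ x, ∀ i j : Fin n, |D2 V x i j| ≤ C₀ * wt V s x) :
    ∃ Cs r : ℝ, 1 < Cs ∧ 0 < r ∧ ∀ x x' : Fin n → ℝ,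
      wt V s x * ∑ i, (x i - x' i) ^ 2 ≤ r ^ 2 →
      Cs⁻¹ ≤ brk (gradV V x) / brk (gradV V x')
        ∧ brk (gradV V x) / brk (gradV V x') ≤ Cs := by
  classical
  -- choice of exponent a
  set a : ℝ := if s ≤ 0 then 1 - s else -s/2 with ha_def
  have ha0 : 0 < |a| := by
    rcases le_or_gt s 0 with h | h
    · rw [ha_def, if_pos h, abs_pos]; linarith
    · rw [ha_def, if_neg (not_le.mpr h), abs_pos]; intro hc; linarith [hc]
  have ha1 : a + s - 1 ≤ 0 := by
    rcases le_or_gt s 0 with h | h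
    · rw [ha_def, if_pos h]; linarith
    · rw [ha_def, if_neg (not_le.mpr h)]; linarith
  have ha2 : -s/2 ≤ a := by
    rcases le_or_gt s 0 with h | h
    · rw [ha_def, if_pos h]; linarith
    · rw [ha_def, if_neg (not_le.mpr h)]
  set K : ℝ := (n:ℝ)^2 * C₀ with hK_def
  have hK0 : 0 ≤ K := by positivity
  set r : ℝ := 1 / (2 * |a| * (K + 1)) with hr_def
  have hr0 : 0 < r := by rw [hr_def]; positivity
  have hraK : |a| * K * r ≤ 1/2 := by
    have hane : |a| ≠ 0 := ne_of_gt ha0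
    have hKne : K + 1 ≠ 0 := by positivity
    have h : |a| * K * (1 / (2 * |a| * (K + 1))) = K / (2 * (K + 1)) := by field_simp
    rw [hr_def, h, div_le_div_iff₀ (by positivity) two_pos]
    nlinarith
  refine ⟨2 ^ (1/|a|), r, ?_, hr0, ?_⟩
  · rw [Real.one_lt_rpow_iff (by norm_num)]
    left; constructor; norm_num; positivity
  intro x x' hball
  set d : Fin n → ℝ := fun i => x' i - x i with hd_def
  set D : ℝ := Real.sqrt (∑ i, (d i)^2) with hD_def
  have hD0 : 0 ≤ D := Real.sqrt_nonneg _
  set Φ : ℝ → ℝ := fun t => brk (gradV V (x + t • d)) with hΦ_def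
  have hΦ1 : ∀ t, 1 ≤ Φ t := fun t => brk_one_le _
  have hΦpos : ∀ t, 0 < Φ t := fun t => brk_pos _
  -- endpoints
  have hγ0 : x + (0:ℝ) • d = x := by funext i; simp
  have hγ1 : x + (1:ℝ) • d = x' := by funext i; simp [hd_def]
  -- derivative of Φ
  set g : Fin n → ℝ → ℝ := fun j t => gradV V (x + t • d) j with hg_def
  set g' : Fin n → ℝ → ℝ := fun j t => ∑ i, D2 V (x + t • d) j i * d i with hg'_def
  have hgD : ∀ j t, HasDerivAt (g j) (g' j t) t := fun j t => gradLineDeriv hV x d j t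
  set Φ' : ℝ → ℝ := fun t =>
    (1 / (2 * Real.sqrt (1 + ∑ j, (g j t)^2))) * (∑ j, 2 * g j t * g' j t) with hΦ'_def
  have hΦeq : ∀ t, Φ t = Real.sqrt (1 + ∑ j, (g j t)^2) := fun t => rfl
  have hΦD : ∀ t, HasDerivAt Φ (Φ' t) t := by
    intro t
    have hq : HasDerivAt (fun t => 1 + ∑ j, (g j t)^2) (∑ j, 2 * g j t * g' j t) t := by
      have : HasDerivAt (fun t => ∑ j, (g j t)^2) (∑ j, 2 * g j t * g' j t) t := by
        apply HasDerivAt.fun_sum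
        intro j _
        have := (hgD j t).fun_pow 2
        simpa [mul_comm, mul_assoc, mul_left_comm] using this
      simpa using this.const_add 1
    have hpos : (0:ℝ) < 1 + ∑ j, (g j t)^2 := by positivity
    exact (Real.hasDerivAt_sqrt (ne_of_gt hpos)).comp t hq
  -- bound on Φ'
  have hΦ'bd : ∀ t, |Φ' t| ≤ K * Φ t ^ s * D := by
    intro t
    have hgb : ∀ j, |g j t| ≤ Φ t := fun j => abs_le_brk (gradV V (x + t • d)) j
    have hg'b : ∀ j, |g' j t| ≤ (n : ℝ) * C₀ * Φ t ^ s * D := by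
      intro j
      have hdi : ∀ i, |d i| ≤ D := by
        intro i
        rw [hD_def, ← Real.sqrt_sq_eq_abs]
        exact Real.sqrt_le_sqrt
          (Finset.single_le_sum (fun i _ => sq_nonneg (d i)) (Finset.mem_univ i))
      calc |g' j t| ≤ ∑ i, |D2 V (x + t • d) j i * d i| := Finset.abs_sum_le_sum_abs _ _
        _ ≤ ∑ _i : Fin n, (C₀ * Φ t ^ s) * D := by
            apply Finset.sum_le_sum
            intro i _
            rw [abs_mul]
            have h1 := hV2 (x + t • d) j i
            have h2 : wt V s (x + t • d) = Φ t ^ s := rfl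
            rw [h2] at h1
            exact mul_le_mul h1 (hdi i) (abs_nonneg _)
              (mul_nonneg hC₀.le (Real.rpow_nonneg (hΦpos t).le _))
        _ = (n:ℝ) * C₀ * Φ t ^ s * D := by
            rw [Finset.sum_const, Finset.card_univ, Fintype.card_fin, nsmul_eq_mul]; ring
    have hΦne : Φ t ≠ 0 := ne_of_gt (hΦpos t)
    have key : |Φ' t| ≤ ∑ j, |g' j t| := by
      have hsq : Real.sqrt (1 + ∑ j, (g j t)^2) = Φ t := (hΦeq t).symm
      have habs : |Φ' t| = (1 / (2 * Φ t)) * |∑ j, 2 * g j t * g' j t| := by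
        rw [hΦ'_def]
        simp only [hsq]
        rw [abs_mul, abs_of_nonneg (le_of_lt (div_pos one_pos (by linarith [hΦpos t]) : (0:ℝ) < 1 / (2 * Φ t)))]
      rw [habs]
      have hsb : |∑ j, 2 * g j t * g' j t| ≤ ∑ j, 2 * Φ t * |g' j t| := by
        refine (Finset.abs_sum_le_sum_abs _ _).trans (Finset.sum_le_sum fun j _ => ?_)
        rw [abs_mul, abs_mul, abs_two]
        have := mul_le_mul_of_nonneg_right (hgb j) (abs_nonneg (g' j t))
        nlinarith [abs_nonneg (g' j t)]
      have h2 : (1 / (2 * Φ t)) * |∑ j, 2 * g j t * g' j t|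
          ≤ (1 / (2 * Φ t)) * ∑ j, 2 * Φ t * |g' j t| :=
        mul_le_mul_of_nonneg_left hsb (le_of_lt (div_pos one_pos (by linarith [hΦpos t])))
      refine h2.trans (le_of_eq ?_)
      rw [← Finset.mul_sum]
      field_simp
    calc |Φ' t| ≤ ∑ j, |g' j t| := key
      _ ≤ ∑ _j : Fin n, (n : ℝ) * C₀ * Φ t ^ s * D :=
          Finset.sum_le_sum fun j _ => hg'b j
      _ = K * Φ t ^ s * D := by
          rw [Finset.sum_const, Finset.card_univ, Fintype.card_fin, nsmul_eq_mul, hK_def]; ring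
  -- F = Φ ^ a
  set F : ℝ → ℝ := fun t => Φ t ^ a with hF_def
  set F' : ℝ → ℝ := fun t => Φ' t * a * Φ t ^ (a - 1) with hF'_def
  have hFD : ∀ t, HasDerivAt F (F' t) t := fun t =>
    (hΦD t).rpow_const (Or.inl (ne_of_gt (hΦpos t)))
  have hF'bd : ∀ t, |F' t| ≤ |a| * K * D := by
    intro t
    have h1 : |F' t| = |Φ' t| * |a| * Φ t ^ (a - 1) := by
      rw [hF'_def, abs_mul, abs_mul, abs_of_nonneg (Real.rpow_nonneg (le_of_lt (hΦpos t)) _)]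
    rw [h1]
    have h2 : |Φ' t| * |a| * Φ t ^ (a-1) ≤ (K * Φ t ^ s * D) * |a| * Φ t ^ (a-1) := by
      have hnn : (0:ℝ) ≤ Φ t ^ (a-1) := Real.rpow_nonneg (hΦpos t).le _
      exact mul_le_mul_of_nonneg_right
        (mul_le_mul_of_nonneg_right (hΦ'bd t) (abs_nonneg a)) hnn
    refine h2.trans ?_
    have h3 : Φ t ^ s * Φ t ^ (a-1) = Φ t ^ (a + s - 1) := by
      rw [← Real.rpow_add (hΦpos t)]; ring_nf
    have h4 : Φ t ^ (a + s - 1) ≤ 1 := by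
      calc Φ t ^ (a+s-1) ≤ Φ t ^ (0:ℝ) := Real.rpow_le_rpow_of_exponent_le (hΦ1 t) ha1
      _ = 1 := Real.rpow_zero _
    calc K * Φ t ^ s * D * |a| * Φ t ^ (a-1)
        = (|a| * K * D) * (Φ t ^ s * Φ t ^ (a-1)) := by ring
      _ = (|a| * K * D) * Φ t ^ (a+s-1) := by rw [h3]
      _ ≤ (|a| * K * D) * 1 := by
          apply mul_le_mul_of_nonneg_left h4
          exact mul_nonneg (mul_nonneg (abs_nonneg a) hK0) hD0
      _ = |a| * K * D := mul_one _
  -- mean value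
  have hMVT : |F 1 - F 0| ≤ |a| * K * D := by
    have := norm_image_sub_le_of_norm_deriv_le_segment_01'
      (f := F) (f' := F') (C := |a| * K * D)
      (fun t _ => (hFD t).hasDerivWithinAt) (fun t _ => hF'bd t)
    simpa [Real.norm_eq_abs] using this
  -- endpoints of Φ
  have hΦ0e : Φ 0 = brk (gradV V x) := by rw [hΦ_def]; simp only [hγ0]
  have hΦ1e : Φ 1 = brk (gradV V x') := by rw [hΦ_def]; simp only [hγ1]
  -- D ≤ r * Φ 0 ^ (-s/2)
  have hsum_eq : ∑ i, (x i - x' i)^2 = ∑ i, (d i)^2 :=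
    Finset.sum_congr rfl fun i _ => by simp only [hd_def]; ring
  have hwt : wt V s x = Φ 0 ^ s := by rw [wt, ← hΦ0e]
  have hDsq : D ^ 2 = ∑ i, (d i)^2 := Real.sq_sqrt (by positivity)
  have h1 : Φ 0 ^ s * D ^ 2 ≤ r ^ 2 := by
    rw [hDsq, ← hsum_eq, ← hwt]; exact hball
  have hΦ0s : (0:ℝ) < Φ 0 ^ s := Real.rpow_pos_of_pos (hΦpos 0) s
  have hΦ0ns : (0:ℝ) < Φ 0 ^ (-s) := Real.rpow_pos_of_pos (hΦpos 0) (-s)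
  have hcancel : Φ 0 ^ (-s) * Φ 0 ^ s = 1 := by
    rw [← Real.rpow_add (hΦpos 0)]; simp
  have hsqhalf : (Φ 0 ^ (-s/2)) ^ 2 = Φ 0 ^ (-s) := by
    rw [← Real.rpow_natCast (Φ 0 ^ (-s/2)) 2, ← Real.rpow_mul (hΦpos 0).le]
    norm_num
  have hD2 : D ^ 2 ≤ (r * Φ 0 ^ (-s/2)) ^ 2 := by
    rw [mul_pow, hsqhalf]
    calc D ^ 2 = Φ 0 ^ (-s) * (Φ 0 ^ s * D ^ 2) := by
          rw [← mul_assoc, hcancel, one_mul]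
      _ ≤ Φ 0 ^ (-s) * r ^ 2 := mul_le_mul_of_nonneg_left h1 hΦ0ns.le
      _ = r ^ 2 * Φ 0 ^ (-s) := by ring
  have hDle : D ≤ r * Φ 0 ^ (-s/2) := by
    have := Real.sqrt_le_sqrt hD2
    rwa [Real.sqrt_sq hD0,
      Real.sqrt_sq (mul_nonneg hr0.le (Real.rpow_nonneg (hΦpos 0).le _))] at this
  have hexp : Φ 0 ^ (-s/2) ≤ Φ 0 ^ a := Real.rpow_le_rpow_of_exponent_le (hΦ1 0) ha2
  -- |F 1 - F 0| ≤ (1/2) * F 0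
  have hF0pos : 0 < F 0 := Real.rpow_pos_of_pos (hΦpos 0) a
  have hF1pos : 0 < F 1 := Real.rpow_pos_of_pos (hΦpos 1) a
  have hhalf : |F 1 - F 0| ≤ (1/2) * F 0 := by
    refine hMVT.trans ?_
    calc |a| * K * D ≤ |a| * K * (r * Φ 0 ^ a) := by
          apply mul_le_mul_of_nonneg_left _ (mul_nonneg (abs_nonneg a) hK0)
          exact hDle.trans (mul_le_mul_of_nonneg_left hexp hr0.le)
      _ = (|a| * K * r) * Φ 0 ^ a := by ring
      _ ≤ (1/2) * Φ 0 ^ a := mul_le_mul_of_nonneg_right hraK hF0pos.le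
  have h5 : F 1 ≤ 2 * F 0 := by
    have := abs_le.mp hhalf
    linarith [this.2]
  have h6 : F 0 ≤ 2 * F 1 := by
    have := abs_le.mp hhalf
    linarith [this.1]
  -- ratio bounds
  clear_value F' F Φ' g' g Φ D d
  set ρ : ℝ := brk (gradV V x) / brk (gradV V x') with hρ_def
  have hρpos : 0 < ρ := div_pos (brk_pos _) (brk_pos _)
  have hρa : ρ ^ a = F 0 / F 1 := by
    rw [hρ_def, Real.div_rpow (brk_pos (gradV V x)).le (brk_pos (gradV V x')).le,
      hF_def]
    simp only [hΦ0e, hΦ1e]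
  have hu1 : (2:ℝ)⁻¹ ≤ ρ ^ a := by
    rw [hρa, le_div_iff₀ hF1pos]; linarith
  have hu2 : ρ ^ a ≤ 2 := by
    rw [hρa, div_le_iff₀ hF1pos]; linarith
  have hρapos : 0 < ρ ^ a := Real.rpow_pos_of_pos hρpos a
  have huabs1 : (2:ℝ)⁻¹ ≤ ρ ^ |a| ∧ ρ ^ |a| ≤ 2 := by
    rcases abs_cases a with ⟨he, _⟩ | ⟨he, _⟩
    · rw [he]; exact ⟨hu1, hu2⟩
    · rw [he, Real.rpow_neg hρpos.le]
      have hmul : ρ ^ a * (ρ ^ a)⁻¹ = 1 := mul_inv_cancel₀ (ne_of_gt hρapos)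
      constructor
      · nlinarith [inv_nonneg.mpr hρapos.le]
      · nlinarith [inv_nonneg.mpr hρapos.le]
  have hrep : (ρ ^ |a|) ^ (1/|a|) = ρ := by
    rw [← Real.rpow_mul hρpos.le, mul_one_div, div_self (ne_of_gt ha0), Real.rpow_one]
  constructor
  · have : ((2:ℝ)⁻¹) ^ (1/|a|) ≤ (ρ ^ |a|) ^ (1/|a|) :=
      Real.rpow_le_rpow (by norm_num) huabs1.1 (by positivity)
    rw [hrep, Real.inv_rpow (by norm_num : (0:ℝ) ≤ 2)] at this
    exact this
  · have : (ρ ^ |a|) ^ (1/|a|) ≤ (2:ℝ) ^ (1/|a|) :=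
      Real.rpow_le_rpow (Real.rpow_nonneg hρpos.le _) huabs1.2 (by positivity)
    rw [hrep] at this
    exact this


end
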